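/- For any weighted composition operator C_{w,f} on C_0(Ω) (1 ≤ p < ∞), N_p(C_{w,f}) := sup_{‖φ‖=1} sup_{N∈ℕ} (1/N) Σ_{n=1}^N ‖(C_{w,f})^n φ‖^p equals sup_{N∈ℕ} (1/N) Σ_{n=1}^N ‖w^{(n)}‖_∞^p; in particular, C_{w,f} is p-absolutely Cesàro bounded if and only if sup_{N} (1/N) Σ_{n=1}^N ‖w^{(n)}‖_∞^p < ∞. -/

import Mathlib

/-!
Since `(C_{w,f}^n φ)(x) = φ(f^n x) · w^{(n)}(x)`, every iterate satisfies
`‖C_{w,f}^n φ‖ ≤ ‖w^{(n)}‖_∞ ‖φ‖`, which gives `≤`. Conversely, for finitely many `n` choose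
points `x_n` at which `|w^{(n)}|` is within `ε` of its supremum, and by Urysohn a norm-one
`φ ∈ C₀(Ω)` equal to `1` at all the points `f^n(x_n)`: then `‖C_{w,f}^n φ‖ ≥ ‖w^{(n)}‖_∞ - ε`
for all these `n` at once, and letting `ε → 0` gives `≥`. Testing against the same Urysohn
functions shows `|w^{(n)}| ≤ ‖C_{w,f}^n‖`, so the suprema `‖w^{(n)}‖_∞` are finite.
-/

open scoped ENNReal ZeroAtInfty
open Filter Topology Finset

namespace ZeroAtInftyContinuousMap

variable {α : Type*} [TopologicalSpace α]

lemma norm_apply_le {β : Type*} [SeminormedAddCommGroup β] (φ : C₀(α, β)) (x : α) :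
    ‖φ x‖ ≤ ‖φ‖ := by
  rw [← norm_toBCF_eq_norm]
  exact φ.toBCF.norm_coe_le_norm x

lemma norm_le {β : Type*} [SeminormedAddCommGroup β] {φ : C₀(α, β)} {C : ℝ} (hC : 0 ≤ C) :
    ‖φ‖ ≤ C ↔ ∀ x, ‖φ x‖ ≤ C := by
  rw [← norm_toBCF_eq_norm]
  exact BoundedContinuousFunction.norm_le hC

lemma exists_norm_eq_one_eqOn_one [RegularSpace α] [LocallyCompactSpace α] [Nonempty α]
    {s : Set α} (hs : IsCompact s) : ∃ φ : C₀(α, ℝ), ‖φ‖ = 1 ∧ Set.EqOn φ 1 s := by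
  obtain ⟨x₀⟩ := ‹Nonempty α›
  obtain ⟨g, hg1, -, hgc, hg01⟩ :=
    exists_continuous_one_zero_of_isCompact (hs.insert x₀) isClosed_empty (Set.disjoint_empty _)
  let φ : C₀(α, ℝ) := ⟨g, hgc.is_zero_at_infty⟩
  refine ⟨φ, le_antisymm ?_ ?_, fun y hy => hg1 (Set.mem_insert_of_mem x₀ hy)⟩
  · exact (norm_le zero_le_one).2 fun x => (Real.norm_of_nonneg (hg01 x).1).trans_le (hg01 x).2
  · have h := norm_apply_le φ x₀
    rwa [show φ x₀ = 1 from hg1 (Set.mem_insert x₀ s), norm_one] at h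

end ZeroAtInftyContinuousMap

open ZeroAtInftyContinuousMap

noncomputable def cesaroMean (a : ℕ → ℝ) (N : ℕ) : ℝ := (1 / N : ℝ) * ∑ n ∈ Icc 1 N, a n

lemma cesaroMean_mono {a b : ℕ → ℝ} {N : ℕ} (h : ∀ n ∈ Icc 1 N, a n ≤ b n) :
    cesaroMean a N ≤ cesaroMean b N :=
  mul_le_mul_of_nonneg_left (sum_le_sum h) (by positivity)

lemma cesaroMean_mul_const (a : ℕ → ℝ) (c : ℝ) (N : ℕ) :
    cesaroMean (fun n => a n * c) N = cesaroMean a N * c := by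
  rw [cesaroMean, cesaroMean, ← sum_mul, mul_assoc]

lemma tendsto_cesaroMean {ι : Type*} {l : Filter ι} {a : ι → ℕ → ℝ} {b : ℕ → ℝ} {N : ℕ}
    (h : ∀ n ∈ Icc 1 N, Tendsto (fun k => a k n) l (𝓝 (b n))) :
    Tendsto (fun k => cesaroMean (a k) N) l (𝓝 (cesaroMean b N)) :=
  (tendsto_finsetSum _ h).const_mul _

section WeightedComposition

variable {Ω : Type*}

/-- The cocycle `w^{(n)} = (w ∘ f^{n-1}) ⋯ (w ∘ f) · w`. -/
def weightIterate (w : Ω → ℝ) (f : Ω → Ω) (n : ℕ) (x : Ω) : ℝ :=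
  ∏ j ∈ range n, w (f^[j] x)

/-- `‖w^{(n)}‖_∞` (a junk `0` if `w^{(n)}` were unbounded; see `bddAbove_abs_weightIterate`). -/
noncomputable def weightIterateNorm (w : Ω → ℝ) (f : Ω → Ω) (n : ℕ) : ℝ :=
  ⨆ x, |weightIterate w f n x|

variable {w : Ω → ℝ} {f : Ω → Ω}

lemma weightIterateNorm_nonneg (n : ℕ) : 0 ≤ weightIterateNorm w f n :=
  Real.iSup_nonneg fun _ => abs_nonneg _

variable [TopologicalSpace Ω] {T : C₀(Ω, ℝ) →L[ℝ] C₀(Ω, ℝ)}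

lemma pow_apply_eq_weightIterate (hT : ∀ φ x, T φ x = φ (f x) * w x) (n : ℕ)
    (φ : C₀(Ω, ℝ)) (x : Ω) : (T ^ n) φ x = φ (f^[n] x) * weightIterate w f n x := by
  induction n generalizing φ with
  | zero => simp [weightIterate]
  | succ n ih =>
    rw [pow_succ, mul_apply_eq_comp, ih, hT, Function.iterate_succ_apply']
    simp only [weightIterate, prod_range_succ]
    ring

variable [RegularSpace Ω] [LocallyCompactSpace Ω]

lemma abs_weightIterate_le_opNorm (hT : ∀ φ x, T φ x = φ (f x) * w x) (n : ℕ) (x : Ω) :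
    |weightIterate w f n x| ≤ ‖T ^ n‖ := by
  have : Nonempty Ω := ⟨x⟩
  obtain ⟨φ, hφ, hφ1⟩ := exists_norm_eq_one_eqOn_one (isCompact_singleton (x := f^[n] x))
  calc |weightIterate w f n x| = ‖(T ^ n) φ x‖ := by
        rw [pow_apply_eq_weightIterate hT, hφ1 rfl, Pi.one_apply, one_mul, Real.norm_eq_abs]
    _ ≤ ‖(T ^ n) φ‖ := norm_apply_le _ _
    _ ≤ ‖T ^ n‖ := by simpa [hφ] using (T ^ n).le_opNorm φ

lemma bddAbove_abs_weightIterate (hT : ∀ φ x, T φ x = φ (f x) * w x) (n : ℕ) :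
    BddAbove (Set.range fun x => |weightIterate w f n x|) :=
  ⟨‖T ^ n‖, Set.forall_mem_range.2 (abs_weightIterate_le_opNorm hT n)⟩

lemma norm_pow_apply_le (hT : ∀ φ x, T φ x = φ (f x) * w x) (n : ℕ) (φ : C₀(Ω, ℝ)) :
    ‖(T ^ n) φ‖ ≤ weightIterateNorm w f n * ‖φ‖ := by
  refine (norm_le (mul_nonneg (weightIterateNorm_nonneg n) (norm_nonneg φ))).2 fun x => ?_
  rw [pow_apply_eq_weightIterate hT, norm_mul, mul_comm, Real.norm_eq_abs (weightIterate _ _ _ _)]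
  exact mul_le_mul (le_ciSup (bddAbove_abs_weightIterate hT n) x) (norm_apply_le φ _)
    (norm_nonneg _) (weightIterateNorm_nonneg n)

lemma exists_norm_eq_one_forall_lt_norm_pow_apply [Nonempty Ω]
    (hT : ∀ φ x, T φ x = φ (f x) * w x) (I : Finset ℕ) {ε : ℝ} (hε : 0 < ε) :
    ∃ φ : C₀(Ω, ℝ), ‖φ‖ = 1 ∧ ∀ n ∈ I, weightIterateNorm w f n - ε < ‖(T ^ n) φ‖ := by
  choose x hx using fun n =>
    exists_lt_of_lt_ciSup (sub_lt_self (weightIterateNorm w f n) hε)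
  obtain ⟨φ, hφ, hφ1⟩ := exists_norm_eq_one_eqOn_one
    (I.finite_toSet.image fun n => f^[n] (x n)).isCompact
  refine ⟨φ, hφ, fun n hn => (hx n).trans_le ?_⟩
  have hφn : φ (f^[n] (x n)) = 1 := hφ1 (Set.mem_image_of_mem _ hn)
  have h := norm_apply_le ((T ^ n) φ) (x n)
  rwa [pow_apply_eq_weightIterate hT, hφn, one_mul, Real.norm_eq_abs] at h

lemma exists_seq_tendsto_norm_pow_apply [Nonempty Ω]
    (hT : ∀ φ x, T φ x = φ (f x) * w x) (I : Finset ℕ) :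
    ∃ φ : ℕ → C₀(Ω, ℝ), (∀ k, ‖φ k‖ = 1) ∧
      ∀ n ∈ I, Tendsto (fun k => ‖(T ^ n) (φ k)‖) atTop (𝓝 (weightIterateNorm w f n)) := by
  choose φ hφ hlt using fun k : ℕ =>
    exists_norm_eq_one_forall_lt_norm_pow_apply hT I (Nat.one_div_pos_of_nat (n := k))
  refine ⟨φ, hφ, fun n hn => ?_⟩
  have hlow : Tendsto (fun k : ℕ => weightIterateNorm w f n - 1 / (k + 1 : ℝ)) atTop
      (𝓝 (weightIterateNorm w f n)) := by
    simpa using tendsto_const_nhds.sub (tendsto_one_div_add_atTop_nhds_zero_nat (𝕜 := ℝ))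
  refine tendsto_of_tendsto_of_tendsto_of_le_of_le hlow tendsto_const_nhds
    (fun k => (hlt k n hn).le) fun k => ?_
  simpa [hφ k] using norm_pow_apply_le hT n (φ k)

variable {p : ℝ}

lemma cesaroMean_norm_pow_apply_rpow_le (hp : 0 ≤ p) (hT : ∀ φ x, T φ x = φ (f x) * w x)
    (φ : C₀(Ω, ℝ)) (N : ℕ) :
    cesaroMean (fun n => ‖(T ^ n) φ‖ ^ p) N
      ≤ cesaroMean (fun n => weightIterateNorm w f n ^ p) N * ‖φ‖ ^ p := by
  rw [← cesaroMean_mul_const]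
  refine cesaroMean_mono fun n _ => ?_
  rw [← Real.mul_rpow (weightIterateNorm_nonneg n) (norm_nonneg φ)]
  exact Real.rpow_le_rpow (norm_nonneg _) (norm_pow_apply_le hT n φ) hp

lemma iSup_cesaroMean_norm_pow_apply_rpow (hp : 0 < p) (hT : ∀ φ x, T φ x = φ (f x) * w x) :
    ⨆ φ : {φ : C₀(Ω, ℝ) // ‖φ‖ = 1}, ⨆ N : ℕ, ⨆ _ : 1 ≤ N,
        ENNReal.ofReal (cesaroMean (fun n => ‖(T ^ n) φ.1‖ ^ p) N)
      = ⨆ N : ℕ, ⨆ _ : 1 ≤ N,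
        ENNReal.ofReal (cesaroMean (fun n => weightIterateNorm w f n ^ p) N) := by
  refine le_antisymm (iSup_le fun φ => iSup₂_le fun N hN => le_iSup₂_of_le N hN ?_)
    (iSup₂_le fun N hN => ?_)
  · refine ENNReal.ofReal_le_ofReal ?_
    simpa [φ.2] using cesaroMean_norm_pow_apply_rpow_le hp.le hT φ.1 N
  obtain hΩ | hΩ := isEmpty_or_nonempty Ω
  · simp [weightIterateNorm, Real.zero_rpow hp.ne', cesaroMean]
  obtain ⟨φ, hφ, hlim⟩ := exists_seq_tendsto_norm_pow_apply hT (Icc 1 N)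
  refine le_of_tendsto' ((ENNReal.continuous_ofReal.tendsto _).comp
    (tendsto_cesaroMean fun n hn => (hlim n hn).rpow_const (Or.inr hp.le))) fun k => ?_
  exact le_iSup_of_le ⟨φ k, hφ k⟩ (le_iSup₂_of_le N hN le_rfl)

lemma exists_cesaroMean_le_iff_ne_top (hp : 0 < p) (hT : ∀ φ x, T φ x = φ (f x) * w x) :
    (∃ C : ℝ, 0 < C ∧ ∀ φ : C₀(Ω, ℝ), ∀ N : ℕ, 1 ≤ N →
        cesaroMean (fun n => ‖(T ^ n) φ‖ ^ p) N ≤ C * ‖φ‖ ^ p) ↔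
      ⨆ N : ℕ, ⨆ _ : 1 ≤ N,
        ENNReal.ofReal (cesaroMean (fun n => weightIterateNorm w f n ^ p) N) ≠ ⊤ := by
  refine ⟨fun ⟨C, _, hC⟩ => ?_, fun hfin => ?_⟩
  · rw [← iSup_cesaroMean_norm_pow_apply_rpow hp hT]
    refine ne_top_of_le_ne_top (b := ENNReal.ofReal C) ENNReal.ofReal_ne_top
      (iSup_le fun φ => iSup₂_le fun N hN => ENNReal.ofReal_le_ofReal ?_)
    simpa [φ.2] using hC φ.1 N hN
  set M := ⨆ N : ℕ, ⨆ _ : 1 ≤ N,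
    ENNReal.ofReal (cesaroMean (fun n => weightIterateNorm w f n ^ p) N)
  refine ⟨max M.toReal 1, by positivity, fun φ N hN => ?_⟩
  have hmean : cesaroMean (fun n => weightIterateNorm w f n ^ p) N ≤ M.toReal :=
    (ENNReal.ofReal_le_iff_le_toReal hfin).1 (le_iSup₂_of_le N hN le_rfl)
  calc cesaroMean (fun n => ‖(T ^ n) φ‖ ^ p) N
      ≤ cesaroMean (fun n => weightIterateNorm w f n ^ p) N * ‖φ‖ ^ p :=
        cesaroMean_norm_pow_apply_rpow_le hp.le hT φ N
    _ ≤ max M.toReal 1 * ‖φ‖ ^ p := by gcongr; exact hmean.trans (le_max_left _ _)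

end WeightedComposition

theorem stmt14_general {Ω : Type*} [TopologicalSpace Ω] [LocallyCompactSpace Ω] [T2Space Ω]
    (p : ℝ) (hp : 1 ≤ p)
    (w : Ω → ℝ)
    (f : Ω → Ω)
    (T : C₀(Ω, ℝ) →L[ℝ] C₀(Ω, ℝ))
    (hT : ∀ (φ : C₀(Ω, ℝ)) (x : Ω), T φ x = φ (f x) * w x) :
    (⨆ φ : {φ : C₀(Ω, ℝ) // ‖φ‖ = 1}, ⨆ N : ℕ, ⨆ _ : 1 ≤ N,
        ENNReal.ofReal ((1 / N : ℝ) * ∑ n ∈ Finset.Icc 1 N, ‖(T ^ n) φ.1‖ ^ p))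
      = (⨆ N : ℕ, ⨆ _ : 1 ≤ N,
          ENNReal.ofReal ((1 / N : ℝ) * ∑ n ∈ Finset.Icc 1 N,
            (⨆ x : Ω, |∏ j ∈ Finset.range n, w (f^[j] x)|) ^ p)) ∧
    ((∃ C : ℝ, 0 < C ∧ ∀ φ : C₀(Ω, ℝ), ∀ N : ℕ, 1 ≤ N →
        (1 / N : ℝ) * ∑ n ∈ Finset.Icc 1 N, ‖(T ^ n) φ‖ ^ p ≤ C * ‖φ‖ ^ p) ↔
      (⨆ N : ℕ, ⨆ _ : 1 ≤ N,
          ENNReal.ofReal ((1 / N : ℝ) * ∑ n ∈ Finset.Icc 1 N,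
            (⨆ x : Ω, |∏ j ∈ Finset.range n, w (f^[j] x)|) ^ p)) ≠ ⊤) := by
  have hp0 : 0 < p := zero_lt_one.trans_le hp
  exact ⟨iSup_cesaroMean_norm_pow_apply_rpow hp0 hT, exists_cesaroMean_le_iff_ne_top hp0 hT⟩

/-- For a weighted composition operator `C_{w,f}` on `C₀(Ω)`,
`N_p(C_{w,f}) = sup_N (1/N) Σ_{n=1}^N ‖w^{(n)}‖_∞^p`; in particular `C_{w,f}` is
`p`-absolutely Cesàro bounded iff this supremum is finite. -/
theorem stmt14 {Ω : Type*} [TopologicalSpace Ω] [LocallyCompactSpace Ω] [T2Space Ω]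
    (p : ℝ) (hp : 1 ≤ p)
    (w : Ω → ℝ) (hw : Continuous w) (hwb : ∃ C : ℝ, ∀ x, |w x| ≤ C)
    (f : Ω → Ω) (hf : Continuous f)
    (hcpt : ∀ ε : ℝ, 0 < ε → ∀ K : Set Ω, IsCompact K →
      IsCompact {x : Ω | f x ∈ K ∧ ε ≤ |w x|})
    (T : C₀(Ω, ℝ) →L[ℝ] C₀(Ω, ℝ))
    (hT : ∀ (φ : C₀(Ω, ℝ)) (x : Ω), T φ x = φ (f x) * w x) :
    (⨆ φ : {φ : C₀(Ω, ℝ) // ‖φ‖ = 1}, ⨆ N : ℕ, ⨆ _ : 1 ≤ N,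
        ENNReal.ofReal ((1 / N : ℝ) * ∑ n ∈ Finset.Icc 1 N, ‖(T ^ n) φ.1‖ ^ p))
      = (⨆ N : ℕ, ⨆ _ : 1 ≤ N,
          ENNReal.ofReal ((1 / N : ℝ) * ∑ n ∈ Finset.Icc 1 N,
            (⨆ x : Ω, |∏ j ∈ Finset.range n, w (f^[j] x)|) ^ p)) ∧
    ((∃ C : ℝ, 0 < C ∧ ∀ φ : C₀(Ω, ℝ), ∀ N : ℕ, 1 ≤ N →
        (1 / N : ℝ) * ∑ n ∈ Finset.Icc 1 N, ‖(T ^ n) φ‖ ^ p ≤ C * ‖φ‖ ^ p) ↔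
      (⨆ N : ℕ, ⨆ _ : 1 ≤ N,
          ENNReal.ofReal ((1 / N : ℝ) * ∑ n ∈ Finset.Icc 1 N,
            (⨆ x : Ω, |∏ j ∈ Finset.range n, w (f^[j] x)|) ^ p)) ≠ ⊤) :=
  stmt14_general p hp w f T hT
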